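/- Let ρ = Σ_k q_k (⊗_{j=1}^N ρ_{jk}) be a separable density matrix on the N-fold tensor product of finite-dimensional local Hilbert spaces, where q_k ≥ 0, Σ_k q_k = 1 and each ρ_{jk} is a density matrix on the j-th factor. For each j let X_j be a Hermitian matrix on the j-th factor and let U = Σ_{j=1}^N X̃_j. Then the variance of U in ρ is bounded below by the average of the local variances: ⟨ΔU²⟩_ρ = Tr(ρU²) − (Tr(ρU))² ≥ Σ_k q_k Σ_{j=1}^N ⟨ΔX_j²⟩_{ρ_{jk}}. -/
import Mathlib


open Matrix BigOperators Finset ComplexOrder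

noncomputable section

/-- Tensor product of local matrices: `(⊗_j A_j)(a,b) = Π_j A_j (a j) (b j)`. -/
def tensorProd {N : ℕ} {ι : Fin N → Type} [∀ j, Fintype (ι j)]
    (A : ∀ j, Matrix (ι j) (ι j) ℂ) : Matrix (∀ j, ι j) (∀ j, ι j) ℂ :=
  Matrix.of fun a b => ∏ j, A j (a j) (b j)

/-- Lift of a local matrix `X` on the `j`-th factor: `X` tensored with the identity
on all other factors. -/
def liftOp {N : ℕ} {ι : Fin N → Type} [∀ j, Fintype (ι j)] [∀ j, DecidableEq (ι j)]
    (j : Fin N) (X : Matrix (ι j) (ι j) ℂ) : Matrix (∀ j, ι j) (∀ j, ι j) ℂ :=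
  Matrix.of fun a b =>
    X (a j) (b j) * ∏ l ∈ Finset.univ.erase j, (if a l = b l then (1 : ℂ) else 0)

/-- A density matrix: positive semidefinite (hence Hermitian) with unit trace. -/
def IsDensityMatrix {n : Type} [Fintype n] (ρ : Matrix n n ℂ) : Prop :=
  ρ.PosSemidef ∧ ρ.trace = 1

/-- Expectation value `⟨A⟩_ρ = Tr(ρ A)` (real part; it is real for Hermitian `ρ`, `A`). -/
def expVal {n : Type} [Fintype n] (ρ A : Matrix n n ℂ) : ℝ := ((ρ * A).trace).re

/-- Variance `⟨ΔA²⟩_ρ = Tr(ρ A²) − (Tr(ρ A))²`. -/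
def varVal {n : Type} [Fintype n] (ρ A : Matrix n n ℂ) : ℝ :=
  expVal ρ (A * A) - (expVal ρ A) ^ 2

section AuxLemmas

variable {N : ℕ} {ι : Fin N → Type} [∀ j, Fintype (ι j)] [∀ j, DecidableEq (ι j)]

lemma tensorProd_mul (A B : ∀ j, Matrix (ι j) (ι j) ℂ) :
    tensorProd A * tensorProd B = tensorProd (fun j => A j * B j) := by
  ext a b
  simp only [tensorProd, Matrix.mul_apply, Matrix.of_apply]
  symm
  rw [Finset.prod_univ_sum, Fintype.piFinset_univ]
  exact Finset.sum_congr rfl fun c _ => Finset.prod_mul_distrib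

lemma tensorProd_trace (A : ∀ j, Matrix (ι j) (ι j) ℂ) :
    (tensorProd A).trace = ∏ j, (A j).trace := by
  simp only [Matrix.trace, Matrix.diag, tensorProd, Matrix.of_apply]
  symm
  rw [Finset.prod_univ_sum, Fintype.piFinset_univ]

lemma liftOp_eq (j : Fin N) (X : Matrix (ι j) (ι j) ℂ) :
    liftOp j X = tensorProd (Function.update (fun l => (1 : Matrix (ι l) (ι l) ℂ)) j X) := by
  ext a b
  simp only [liftOp, tensorProd, Matrix.of_apply]
  rw [← Finset.mul_prod_erase _ _ (Finset.mem_univ j), Function.update_self]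
  congr 1
  refine Finset.prod_congr rfl fun l hl => ?_
  rw [Function.update_of_ne (Finset.ne_of_mem_erase hl)]
  simp [Matrix.one_apply]

lemma trace_tensor_mul (A B : ∀ j, Matrix (ι j) (ι j) ℂ) :
    (tensorProd A * tensorProd B).trace = ∏ j, (A j * B j).trace := by
  rw [tensorProd_mul, tensorProd_trace]

lemma liftOp_mul_same (j : Fin N) (X Y : Matrix (ι j) (ι j) ℂ) :
    liftOp j X * liftOp j Y = liftOp j (X * Y) := by
  rw [liftOp_eq, liftOp_eq, liftOp_eq, tensorProd_mul]
  have h : (fun m => Function.update (fun l => (1 : Matrix (ι l) (ι l) ℂ)) j X m *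
      Function.update (fun l => (1 : Matrix (ι l) (ι l) ℂ)) j Y m)
      = Function.update (fun l => (1 : Matrix (ι l) (ι l) ℂ)) j (X * Y) := by
    funext m
    by_cases h : m = j
    · subst h; simp
    · simp [Function.update_of_ne h]
  rw [h]

lemma trace_tensor_lift (ρA : ∀ l, Matrix (ι l) (ι l) ℂ) (htr : ∀ l, (ρA l).trace = 1)
    (j : Fin N) (X : Matrix (ι j) (ι j) ℂ) :
    (tensorProd ρA * liftOp j X).trace = (ρA j * X).trace := by
  rw [liftOp_eq, trace_tensor_mul, ← Finset.mul_prod_erase _ _ (Finset.mem_univ j),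
    Function.update_self]
  have h1 : ∀ l ∈ Finset.univ.erase j,
      (ρA l * Function.update (fun m => (1 : Matrix (ι m) (ι m) ℂ)) j X l).trace = 1 := by
    intro l hl
    rw [Function.update_of_ne (Finset.ne_of_mem_erase hl), mul_one, htr]
  rw [Finset.prod_congr rfl h1, Finset.prod_const_one, mul_one]

lemma trace_tensor_lift_lift (ρA : ∀ m, Matrix (ι m) (ι m) ℂ) (htr : ∀ m, (ρA m).trace = 1)
    {j l : Fin N} (hjl : j ≠ l) (X : Matrix (ι j) (ι j) ℂ) (Y : Matrix (ι l) (ι l) ℂ) :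
    (tensorProd ρA * (liftOp j X * liftOp l Y)).trace
      = (ρA j * X).trace * (ρA l * Y).trace := by
  rw [liftOp_eq, liftOp_eq, tensorProd_mul, trace_tensor_mul]
  have hlj : l ∈ Finset.univ.erase j := Finset.mem_erase.mpr ⟨hjl.symm, Finset.mem_univ l⟩
  rw [← Finset.mul_prod_erase _ _ (Finset.mem_univ j), ← Finset.mul_prod_erase _ _ hlj]
  have h1 : ∀ m ∈ (Finset.univ.erase j).erase l,
      (ρA m * (Function.update (fun m' => (1 : Matrix (ι m') (ι m') ℂ)) j X m *
        Function.update (fun m' => (1 : Matrix (ι m') (ι m') ℂ)) l Y m)).trace = 1 := by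
    intro m hm
    rw [Function.update_of_ne (Finset.ne_of_mem_erase (Finset.mem_of_mem_erase hm)),
      Function.update_of_ne (Finset.ne_of_mem_erase hm), mul_one, mul_one, htr]
  rw [Finset.prod_congr rfl h1, Finset.prod_const_one, mul_one,
    Function.update_self, Function.update_self,
    Function.update_of_ne hjl, Function.update_of_ne hjl.symm, mul_one, one_mul]

lemma trace_mul_herm_re {n : Type} [Fintype n] {ρ A : Matrix n n ℂ}
    (hρ : ρ.IsHermitian) (hA : A.IsHermitian) :
    (ρ * A).trace = (((ρ * A).trace.re : ℝ) : ℂ) := by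
  have h : (starRingEnd ℂ) ((ρ * A).trace) = (ρ * A).trace := by
    have := Matrix.trace_conjTranspose (ρ * A)
    rw [Matrix.conjTranspose_mul, hρ.eq, hA.eq, Matrix.trace_mul_comm] at this
    exact this.symm
  exact (Complex.conj_eq_iff_re.mp h).symm

lemma double_sum_ite {α : Type*} [Fintype α] [DecidableEq α] (f g : α → ℝ) :
    ∑ j : α, ∑ l : α, (if j = l then f j else g j * g l)
      = (∑ j, (f j - g j ^ 2)) + (∑ j, g j) ^ 2 := by
  have h : ∀ j : α, ∑ l : α, (if j = l then f j else g j * g l)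
      = g j * (∑ l, g l) + (f j - g j ^ 2) := by
    intro j
    have : ∀ l : α, (if j = l then f j else g j * g l)
        = g j * g l + (if j = l then f j - g j * g j else 0) := by
      intro l
      by_cases h : j = l
      · subst h; simp
      · simp [h]
    simp_rw [this, Finset.sum_add_distrib, Finset.sum_ite_eq, Finset.mem_univ, if_true,
      ← Finset.mul_sum]
    ring
  simp_rw [h, Finset.sum_add_distrib, ← Finset.sum_mul]
  ring

end AuxLemmas

/-- For a separable state `ρ = Σ_k q_k ⊗_j ρ_{jk}` and `U = Σ_j X̃_j`, the variance of `U`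
is bounded below by the mixture average of the sums of local variances. -/

theorem separable_variance_U_ge_avg_local
    {N : ℕ} {ι : Fin N → Type} [∀ j, Fintype (ι j)] [∀ j, DecidableEq (ι j)]
    {K : Type} [Fintype K]
    (q : K → ℝ) (hq0 : ∀ k, 0 ≤ q k) (hq1 : ∑ k, q k = 1)
    (ρloc : K → ∀ j, Matrix (ι j) (ι j) ℂ)
    (hρloc : ∀ k j, IsDensityMatrix (ρloc k j))
    (ρ : Matrix (∀ j, ι j) (∀ j, ι j) ℂ)
    (hρ : ρ = ∑ k, (q k : ℂ) • tensorProd (ρloc k))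
    (X : ∀ j, Matrix (ι j) (ι j) ℂ) (hX : ∀ j, (X j).IsHermitian)
    (U : Matrix (∀ j, ι j) (∀ j, ι j) ℂ) (hU : U = ∑ j, liftOp j (X j)) :
    varVal ρ U ≥ ∑ k, q k * ∑ j, varVal (ρloc k j) (X j) := by
  classical
  have hherm : ∀ k j, (ρloc k j).IsHermitian := fun k j => (hρloc k j).1.1
  have htr1 : ∀ k j, (ρloc k j).trace = 1 := fun k j => (hρloc k j).2
  set t : K → Fin N → ℝ := fun k j => expVal (ρloc k j) (X j) with ht
  set s : K → Fin N → ℝ := fun k j => expVal (ρloc k j) (X j * X j) with hs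
  set m : K → ℝ := fun k => ∑ j, t k j with hm
  have hXX : ∀ j, (X j * X j).IsHermitian := fun j => by
    unfold Matrix.IsHermitian
    rw [Matrix.conjTranspose_mul, (hX j).eq]
  have htc : ∀ k j, ((ρloc k j) * X j).trace = ((t k j : ℝ) : ℂ) :=
    fun k j => trace_mul_herm_re (hherm k j) (hX j)
  have hsc : ∀ k j, ((ρloc k j) * (X j * X j)).trace = ((s k j : ℝ) : ℂ) :=
    fun k j => trace_mul_herm_re (hherm k j) (hXX j)
  have hjl : ∀ k (j l : Fin N),
      (tensorProd (ρloc k) * (liftOp j (X j) * liftOp l (X l))).trace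
        = (((if j = l then s k j else t k j * t k l : ℝ)) : ℂ) := by
    intro k j l
    by_cases h : j = l
    · subst h
      rw [liftOp_mul_same, trace_tensor_lift (ρloc k) (htr1 k), hsc k j, if_pos rfl]
    · rw [trace_tensor_lift_lift (ρloc k) (htr1 k) h, htc k j, htc k l, if_neg h]
      push_cast
      ring
  have hk1 : ∀ k, (tensorProd (ρloc k) * U).trace = ((m k : ℝ) : ℂ) := by
    intro k
    rw [hU, Matrix.mul_sum, Matrix.trace_sum, hm]
    push_cast
    exact Finset.sum_congr rfl fun j _ =>
      (trace_tensor_lift (ρloc k) (htr1 k) j (X j)).trans (htc k j)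
  have hk2 : ∀ k, (tensorProd (ρloc k) * (U * U)).trace
      = (((∑ j, (s k j - t k j ^ 2)) + m k ^ 2 : ℝ) : ℂ) := by
    intro k
    rw [hU, Finset.sum_mul_sum]
    simp_rw [Matrix.mul_sum, Matrix.trace_sum, hjl k]
    simp only [hm]
    rw [← double_sum_ite (s k) (t k)]
    norm_cast
  have E1 : (ρ * U).trace = ((∑ k, q k * m k : ℝ) : ℂ) := by
    rw [hρ, Finset.sum_mul, Matrix.trace_sum]
    simp_rw [Matrix.smul_mul, Matrix.trace_smul, hk1, smul_eq_mul]
    push_cast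
    rfl
  have E2 : (ρ * (U * U)).trace
      = ((∑ k, q k * ((∑ j, (s k j - t k j ^ 2)) + m k ^ 2) : ℝ) : ℂ) := by
    rw [hρ, Finset.sum_mul, Matrix.trace_sum]
    simp_rw [Matrix.smul_mul, Matrix.trace_smul, hk2, smul_eq_mul]
    push_cast
    rfl
  have hv : varVal ρ U
      = (∑ k, q k * ((∑ j, (s k j - t k j ^ 2)) + m k ^ 2)) - (∑ k, q k * m k) ^ 2 := by
    unfold varVal expVal
    rw [E1, E2, Complex.ofReal_re, Complex.ofReal_re]
  have key : (∑ k, q k * m k) ^ 2 ≤ ∑ k, q k * m k ^ 2 := by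
    have h := Finset.sum_sq_le_sum_mul_sum_of_sq_eq_mul Finset.univ
      (r := fun k => q k * m k) (f := q) (g := fun k => q k * m k ^ 2)
      (fun k _ => hq0 k) (fun k _ => mul_nonneg (hq0 k) (sq_nonneg _)) (fun k _ => by ring)
    rwa [hq1, one_mul] at h
  have expand : ∑ k, q k * ((∑ j, (s k j - t k j ^ 2)) + m k ^ 2)
      = (∑ k, q k * ∑ j, (s k j - t k j ^ 2)) + ∑ k, q k * m k ^ 2 := by
    rw [← Finset.sum_add_distrib]
    exact Finset.sum_congr rfl fun k _ => by ring
  have hvar : ∑ k, q k * ∑ j, varVal (ρloc k j) (X j)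
      = ∑ k, q k * ∑ j, (s k j - t k j ^ 2) := by
    rfl
  rw [hv, expand, hvar]
  linarith [key]
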